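/- For every real parameter M ≥ 1 and all a, b ∈ ℝ, the modified double-well potential satisfies the two-sided Taylor bounds F_M(a) + f_M(a)(b − a) − (1/2)(b − a)² ≤ F_M(b) ≤ F_M(a) + f_M(a)(b − a) + ((3M² − 1)/2)(b − a)². -/

import Mathlib

/-- The modified double-well nonlinearity `f_M` with cut-off parameter `M`. -/
noncomputable def fM (M x : ℝ) : ℝ :=
  if x > M then (3 * M ^ 2 - 1) * x - 2 * M ^ 3
  else if x < -M then (3 * M ^ 2 - 1) * x + 2 * M ^ 3
  else x * (x ^ 2 - 1)

/-- The modified double-well potential `F_M` with cut-off parameter `M`: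
the antiderivative of `f_M`, normalized by `F_M(0) = 1/4`. -/
noncomputable def FM (M x : ℝ) : ℝ :=
  if |x| ≤ M then (1 - x ^ 2) ^ 2 / 4
  else (1 - M ^ 2) ^ 2 / 4 + (3 * M ^ 2 - 1) * (x ^ 2 - M ^ 2) / 2 - 2 * M ^ 3 * (|x| - M)

/-!
`F_M` is `C¹` with `F_M' = f_M`, and `f_M` is pinched between two slopes: both `f_M(x) + x` and
`(3M² − 1)x − f_M(x)` are monotone (inside `[-M, M]` they are `x³` and `3M²x − x³`, outside they
are affine or constant). By the mean value theorem, a differentiable function with monotone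
derivative lies above its tangent lines; applied to `F_M(x) + x²/2` and `(3M² − 1)x²/2 − F_M(x)`
this gives the two bounds.
-/

open Set Topology

theorem add_mul_sub_le_of_hasDerivAt_of_monotone {F f : ℝ → ℝ}
    (hF : ∀ x, HasDerivAt F (f x) x) (hf : Monotone f) (a b : ℝ) :
    F a + f a * (b - a) ≤ F b := by
  have hFc : Continuous F := continuous_iff_continuousAt.2 fun x => (hF x).continuousAt
  rcases lt_trichotomy a b with hab | rfl | hba
  · obtain ⟨c, hc, hfc⟩ := exists_hasDerivAt_eq_slope F f hab hFc.continuousOn fun x _ => hF x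
    rw [eq_div_iff (sub_ne_zero.2 hab.ne')] at hfc
    nlinarith [hf hc.1.le]
  · simp
  · obtain ⟨c, hc, hfc⟩ := exists_hasDerivAt_eq_slope F f hba hFc.continuousOn fun x _ => hF x
    rw [eq_div_iff (sub_ne_zero.2 hba.ne')] at hfc
    nlinarith [hf hc.2.le]

theorem add_mul_sub_sub_sq_le_of_hasDerivAt {F f : ℝ → ℝ} {c : ℝ}
    (hF : ∀ x, HasDerivAt F (f x) x) (hf : Monotone fun x => f x + c * x) (a b : ℝ) :
    F a + f a * (b - a) - c / 2 * (b - a) ^ 2 ≤ F b := by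
  have hG : ∀ x, HasDerivAt (fun x => F x + c / 2 * x ^ 2) (f x + c * x) x := fun x =>
    ((hF x).add ((hasDerivAt_pow 2 x).const_mul (c / 2))).congr_deriv (by ring)
  linear_combination add_mul_sub_le_of_hasDerivAt_of_monotone hG hf a b

theorem le_add_mul_sub_add_sq_of_hasDerivAt {F f : ℝ → ℝ} {K : ℝ}
    (hF : ∀ x, HasDerivAt F (f x) x) (hf : Monotone fun x => K * x - f x) (a b : ℝ) :
    F b ≤ F a + f a * (b - a) + K / 2 * (b - a) ^ 2 := by
  have hf' : Monotone fun x => -f x + K * x := by simpa only [neg_add_eq_sub] using hf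
  have hnegF : ∀ x, HasDerivAt (fun x => -F x) (-f x) x := fun x => (hF x).neg
  linear_combination add_mul_sub_sub_sq_le_of_hasDerivAt hnegF hf' a b

theorem hasDerivAt_of_eventuallyEq_nhdsLE_nhdsGE {F P Q : ℝ → ℝ} {c d : ℝ}
    (hP : HasDerivAt P d c) (hQ : HasDerivAt Q d c)
    (hFP : F =ᶠ[𝓝[≤] c] P) (hFQ : F =ᶠ[𝓝[≥] c] Q) : HasDerivAt F d c := by
  have hl := hP.hasDerivWithinAt.congr_of_eventuallyEq hFP (hFP.eq_of_nhdsWithin self_mem_Iic)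
  have hr := hQ.hasDerivWithinAt.congr_of_eventuallyEq hFQ (hFQ.eq_of_nhdsWithin self_mem_Ici)
  simpa only [Iic_union_Ici, hasDerivWithinAt_univ] using hl.union hr

theorem Monotone.of_monotoneOn_Iic_Icc_Ici {α β : Type*} [LinearOrder α] [Preorder β]
    {f : α → β} {a b : α} (hab : a ≤ b) (h₁ : MonotoneOn f (Iic a))
    (h₂ : MonotoneOn f (Icc a b)) (h₃ : MonotoneOn f (Ici b)) : Monotone f := by
  refine h₁.Iic_union_Ici ?_
  rw [← Icc_union_Ici_eq_Ici hab]
  exact h₂.union_right h₃ (isGreatest_Icc hab) isLeast_Ici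

section DoubleWell

variable {M x : ℝ}

theorem fM_of_abs_le (h : |x| ≤ M) : fM M x = x * (x ^ 2 - 1) := by
  obtain ⟨h₁, h₂⟩ := abs_le.1 h
  simp [fM, not_lt.2 h₁, not_lt.2 h₂]

theorem fM_of_le (hM : 0 ≤ M) (h : M ≤ x) : fM M x = (3 * M ^ 2 - 1) * x - 2 * M ^ 3 := by
  rcases h.lt_or_eq with h | rfl
  · exact if_pos h
  · rw [fM_of_abs_le (abs_of_nonneg hM).le]; ring

theorem fM_of_le_neg (hM : 0 ≤ M) (h : x ≤ -M) :
    fM M x = (3 * M ^ 2 - 1) * x + 2 * M ^ 3 := by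
  rcases h.lt_or_eq with h | rfl
  · rw [fM, if_neg (by linarith), if_pos h]
  · rw [fM_of_abs_le (by rw [abs_neg, abs_of_nonneg hM])]; ring

theorem FM_of_abs_le (h : |x| ≤ M) : FM M x = (1 - x ^ 2) ^ 2 / 4 := if_pos h

theorem FM_of_le (hM : 0 ≤ M) (h : M ≤ x) :
    FM M x = (1 - M ^ 2) ^ 2 / 4 + (3 * M ^ 2 - 1) * (x ^ 2 - M ^ 2) / 2 - 2 * M ^ 3 * (x - M) := by
  rcases h.lt_or_eq with h | rfl
  · rw [FM, abs_of_pos (hM.trans_lt h), if_neg h.not_ge]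
  · rw [FM_of_abs_le (abs_of_nonneg hM).le]; ring

theorem FM_of_le_neg (hM : 0 ≤ M) (h : x ≤ -M) :
    FM M x = (1 - M ^ 2) ^ 2 / 4 + (3 * M ^ 2 - 1) * (x ^ 2 - M ^ 2) / 2 + 2 * M ^ 3 * (x + M) := by
  rcases h.lt_or_eq with h | rfl
  · rw [FM, abs_of_neg (by linarith), if_neg (by linarith)]; ring
  · rw [FM_of_abs_le (by rw [abs_neg, abs_of_nonneg hM])]; ring

theorem monotone_fM_add_self (hM : 0 ≤ M) : Monotone fun x => fM M x + x := by
  refine .of_monotoneOn_Iic_Icc_Ici (neg_le_self hM) ?_ ?_ ?_ <;> intro x hx y hy hxy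
  · simp only [fM_of_le_neg hM hx, fM_of_le_neg hM hy]
    nlinarith [mul_nonneg (sq_nonneg M) (sub_nonneg.2 hxy)]
  · simp only [fM_of_abs_le (abs_le.2 hx), fM_of_abs_le (abs_le.2 hy)]
    have : 0 ≤ (x + y) ^ 2 + x ^ 2 + y ^ 2 := by positivity
    nlinarith [mul_nonneg (sub_nonneg.2 hxy) this]
  · simp only [fM_of_le hM hx, fM_of_le hM hy]
    nlinarith [mul_nonneg (sq_nonneg M) (sub_nonneg.2 hxy)]

theorem monotone_mul_self_sub_fM (hM : 0 ≤ M) :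
    Monotone fun x => (3 * M ^ 2 - 1) * x - fM M x := by
  refine .of_monotoneOn_Iic_Icc_Ici (neg_le_self hM) ?_ ?_ ?_ <;> intro x hx y hy hxy
  · simp only [fM_of_le_neg hM hx, fM_of_le_neg hM hy]; linarith
  · simp only [fM_of_abs_le (abs_le.2 hx), fM_of_abs_le (abs_le.2 hy)]
    have : x ^ 2 + x * y + y ^ 2 ≤ 3 * M ^ 2 := by nlinarith [hx.1, hx.2, hy.1, hy.2]
    nlinarith [mul_nonneg (sub_nonneg.2 hxy) (sub_nonneg.2 this)]
  · simp only [fM_of_le hM hx, fM_of_le hM hy]; linarith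

theorem hasDerivAt_FM (hM : 0 < M) (x : ℝ) : HasDerivAt (FM M) (fM M x) x := by
  let P : ℝ → ℝ := fun x => (1 - x ^ 2) ^ 2 / 4
  let Pr : ℝ → ℝ := fun x =>
    (1 - M ^ 2) ^ 2 / 4 + (3 * M ^ 2 - 1) * (x ^ 2 - M ^ 2) / 2 - 2 * M ^ 3 * (x - M)
  let Pl : ℝ → ℝ := fun x =>
    (1 - M ^ 2) ^ 2 / 4 + (3 * M ^ 2 - 1) * (x ^ 2 - M ^ 2) / 2 + 2 * M ^ 3 * (x + M)
  have hP : ∀ x, HasDerivAt P (x * (x ^ 2 - 1)) x := fun x =>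
    ((((hasDerivAt_pow 2 x).const_sub 1).pow 2).div_const 4).congr_deriv (by ring)
  have hPr : ∀ x, HasDerivAt Pr ((3 * M ^ 2 - 1) * x - 2 * M ^ 3) x := fun x =>
    (((((hasDerivAt_pow 2 x).sub_const (M ^ 2)).const_mul (3 * M ^ 2 - 1)).div_const 2).const_add
      ((1 - M ^ 2) ^ 2 / 4)).sub (((hasDerivAt_id x).sub_const M).const_mul (2 * M ^ 3))
      |>.congr_deriv (by ring)
  have hPl : ∀ x, HasDerivAt Pl ((3 * M ^ 2 - 1) * x + 2 * M ^ 3) x := fun x =>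
    (((((hasDerivAt_pow 2 x).sub_const (M ^ 2)).const_mul (3 * M ^ 2 - 1)).div_const 2).const_add
      ((1 - M ^ 2) ^ 2 / 4)).add (((hasDerivAt_id x).add_const M).const_mul (2 * M ^ 3))
      |>.congr_deriv (by ring)
  have hFP : EqOn (FM M) P (Icc (-M) M) := fun y hy => FM_of_abs_le (abs_le.2 hy)
  have hFPr : EqOn (FM M) Pr (Ici M) := fun y hy => FM_of_le hM.le hy
  have hFPl : EqOn (FM M) Pl (Iic (-M)) := fun y hy => FM_of_le_neg hM.le hy
  rcases lt_trichotomy x (-M) with hx | rfl | hx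
  · rw [fM_of_le_neg hM.le hx.le]
    exact (hPl x).congr_of_eventuallyEq (hFPl.eventuallyEq_of_mem (Iic_mem_nhds hx))
  · rw [fM_of_le_neg hM.le le_rfl]
    exact hasDerivAt_of_eventuallyEq_nhdsLE_nhdsGE (hPl _) ((hP _).congr_deriv (by ring))
      (hFPl.eventuallyEq_of_mem self_mem_nhdsWithin)
      (hFP.eventuallyEq_of_mem (Icc_mem_nhdsGE (by linarith)))
  rcases lt_trichotomy x M with hx' | rfl | hx'
  · rw [fM_of_abs_le (abs_le.2 ⟨hx.le, hx'.le⟩)]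
    exact (hP x).congr_of_eventuallyEq (hFP.eventuallyEq_of_mem (Icc_mem_nhds hx hx'))
  · rw [fM_of_le hM.le le_rfl]
    exact hasDerivAt_of_eventuallyEq_nhdsLE_nhdsGE ((hP _).congr_deriv (by ring)) (hPr _)
      (hFP.eventuallyEq_of_mem (Icc_mem_nhdsLE (by linarith)))
      (hFPr.eventuallyEq_of_mem self_mem_nhdsWithin)
  · rw [fM_of_le hM.le hx'.le]
    exact (hPr x).congr_of_eventuallyEq (hFPr.eventuallyEq_of_mem (Ici_mem_nhds hx'))

end DoubleWell

/-- Two-sided Taylor bounds for `F_M`: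
`F_M(a) + f_M(a)(b − a) − (1/2)(b − a)² ≤ F_M(b)
  ≤ F_M(a) + f_M(a)(b − a) + ((3M² − 1)/2)(b − a)²`. -/
theorem FM_taylor_bounds (M : ℝ) (hM : 1 ≤ M) (a b : ℝ) :
    FM M a + fM M a * (b - a) - (1 / 2) * (b - a) ^ 2 ≤ FM M b ∧
    FM M b ≤ FM M a + fM M a * (b - a) + ((3 * M ^ 2 - 1) / 2) * (b - a) ^ 2 := by
  have hM₀ : 0 < M := by linarith
  have hF := hasDerivAt_FM hM₀
  constructor
  · have hmono : Monotone fun x => fM M x + 1 * x := by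
      simpa only [one_mul] using monotone_fM_add_self hM₀.le
    linear_combination add_mul_sub_sub_sq_le_of_hasDerivAt hF hmono a b
  · exact le_add_mul_sub_add_sq_of_hasDerivAt hF (monotone_mul_self_sub_fM hM₀.le) a b
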